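/- Let g be a compact simple Lie algebra, t a maximal abelian subalgebra, Π = {α_1,…,α_n} the fundamental roots, δ = Σ_j m_j α_j the highest root, and K_i ∈ t_C defined by α_j(K_i) = δ_{ji}. Suppose m_p = m_q = 1 and let σ := Ad(exp(π/2)√−1(2K_p + K_q)). Then g^σ = g^{Ad(exp(2π/3)√−1(K_p+K_q))}; consequently, since Ad(exp(2π/3)√−1(K_p+K_q)) has order 3, (g, g^σ) is a 3-symmetric pair. -/

import Mathlib

/-!
Common framework: we model the complexification `gC` of a compact Lie algebra `g` as a
complex Lie algebra, the compact real form `g` and the maximal abelian subalgebra `t`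
as real Lie subalgebras of `gC`, roots of `(gC, tC)` as complex-linear functionals on
`gC` (only their restriction to `tC`, the complex span of `t`, matters), and the
inner automorphisms `Ad(exp X) = exp (ad X)` through an abstract family `expAd`
characterized by its action on eigenvectors of `ad X` (which determines it on the
compact form, where every `ad X` is semisimple).
-/

open Complex

namespace Paper

variable (gC : Type) [LieRing gC] [LieAlgebra ℂ gC] [LieAlgebra ℝ gC]
  [IsScalarTower ℝ ℂ gC] [FiniteDimensional ℂ gC]

/-- Composition group structure on the Lie algebra automorphisms of `gC`. -/
noncomputable instance : Group (gC ≃ₗ⁅ℂ⁆ gC) where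
  mul f g := g.trans f
  one := LieEquiv.refl
  inv f := f.symm
  mul_assoc f g h := rfl
  one_mul f := rfl
  mul_one f := rfl
  inv_mul_cancel f := by
    ext x
    exact f.symm_apply_apply x

/-- The complex span `t_ℂ` of a real subalgebra `t` of `gC`. -/
def cspan (t : LieSubalgebra ℝ gC) : Submodule ℂ gC := Submodule.span ℂ (t : Set gC)

/-- The root space of the functional `a` with respect to `t_ℂ`. -/
def rootSpace (t : LieSubalgebra ℝ gC) (a : Module.Dual ℂ gC) : Set gC :=
  {X : gC | ∀ H ∈ cspan gC t, ⁅H, X⁆ = a H • X}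

/-- `a` is a root of `(gC, t_ℂ)`. -/
def IsRoot (t : LieSubalgebra ℝ gC) (a : Module.Dual ℂ gC) : Prop :=
  (∃ H ∈ cspan gC t, a H ≠ 0) ∧ ∃ X : gC, X ≠ 0 ∧ X ∈ rootSpace gC t a

/-- `g` is a compact real form of `gC`: `gC = g ⊕ √-1 g` and the Killing form of `g`
is negative definite. -/
structure IsCompactForm (g : LieSubalgebra ℝ gC) : Prop where
  spans : ∀ z : gC, ∃ x ∈ g, ∃ y ∈ g, z = x + Complex.I • y
  inj : ∀ x : gC, x ∈ g → Complex.I • x ∈ g → x = 0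
  negdef : ∀ x : ↥g, x ≠ 0 → killingForm ℝ ↥g x x < 0

/-- `t` is a maximal abelian subalgebra of `g`. -/
structure IsMaxAbelian (g t : LieSubalgebra ℝ gC) : Prop where
  le : t ≤ g
  abelian : ∀ x ∈ t, ∀ y ∈ t, ⁅x, y⁆ = (0 : gC)
  max : ∀ t' : LieSubalgebra ℝ gC, t' ≤ g →
    (∀ x ∈ t', ∀ y ∈ t', ⁅x, y⁆ = (0 : gC)) → t ≤ t' → t' = t

/-- `α 1, …, α n` is a system of fundamental (simple) roots of `Δ(gC, t_ℂ)` and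
`K 1, …, K n` is the dual basis of `t_ℂ`, i.e. `α i (K j) = δ_{ij}`. -/
structure IsSimpleSystem (t : LieSubalgebra ℝ gC) (n : ℕ) (α : ℕ → Module.Dual ℂ gC)
    (K : ℕ → gC) : Prop where
  isRoot : ∀ i ∈ Finset.Icc 1 n, IsRoot gC t (α i)
  decomp : ∀ b : Module.Dual ℂ gC, IsRoot gC t b →
    (∃ k : ℕ → ℕ, ∀ H ∈ cspan gC t, b H = ∑ j ∈ Finset.Icc 1 n, (k j : ℂ) * α j H) ∨
    (∃ k : ℕ → ℕ, ∀ H ∈ cspan gC t, b H = -∑ j ∈ Finset.Icc 1 n, (k j : ℂ) * α j H)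
  K_mem : ∀ j ∈ Finset.Icc 1 n, K j ∈ cspan gC t
  K_dual : ∀ i ∈ Finset.Icc 1 n, ∀ j ∈ Finset.Icc 1 n, α i (K j) = if i = j then 1 else 0

/-- `δ = Σ m_j α_j` is the highest root of `Δ(gC, t_ℂ)`. -/
structure IsHighestRoot (t : LieSubalgebra ℝ gC) (n : ℕ) (α : ℕ → Module.Dual ℂ gC)
    (δ : Module.Dual ℂ gC) (m : ℕ → ℕ) : Prop where
  isRoot : IsRoot gC t δ
  decomp : ∀ H ∈ cspan gC t, δ H = ∑ j ∈ Finset.Icc 1 n, (m j : ℂ) * α j H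
  highest : ∀ (b : Module.Dual ℂ gC) (k : ℕ → ℕ), IsRoot gC t b →
    (∀ H ∈ cspan gC t, b H = ∑ j ∈ Finset.Icc 1 n, (k j : ℂ) * α j H) →
    ∀ j ∈ Finset.Icc 1 n, k j ≤ m j

/-- `expAd X` is the inner automorphism `Ad(exp X) = exp (ad X)` of `gC`:
it multiplies each eigenvector of `ad X` with eigenvalue `c` by `e^c`, it is additive on
commuting arguments, and conjugation by any automorphism transports it naturally. -/
structure IsExpAd (expAd : gC → (gC ≃ₗ⁅ℂ⁆ gC)) : Prop where
  eig : ∀ (X Y : gC) (c : ℂ), ⁅X, Y⁆ = c • Y → expAd X Y = Complex.exp c • Y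
  add : ∀ X Y : gC, ⁅X, Y⁆ = 0 → expAd (X + Y) = expAd X * expAd Y
  conj : ∀ (f : gC ≃ₗ⁅ℂ⁆ gC) (X : gC), f * expAd X * f⁻¹ = expAd (f X)

/-- The group `Int(s)` of inner automorphisms generated by `exp (ad X)`, `X ∈ s`. -/
noncomputable def Inn (expAd : gC → (gC ≃ₗ⁅ℂ⁆ gC)) (s : LieSubalgebra ℝ gC) :
    Subgroup (gC ≃ₗ⁅ℂ⁆ gC) :=
  Subgroup.closure (expAd '' (s : Set gC))

/-- The automorphism `τ_H = Ad(exp π √-1 H)`. -/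
noncomputable def tau (expAd : gC → (gC ≃ₗ⁅ℂ⁆ gC)) (H : gC) : gC ≃ₗ⁅ℂ⁆ gC :=
  expAd (((Real.pi : ℂ) * Complex.I) • H)

/-- The automorphism `Ad(exp (π/2) √-1 H)`. -/
noncomputable def sigmaAd (expAd : gC → (gC ≃ₗ⁅ℂ⁆ gC)) (H : gC) : gC ≃ₗ⁅ℂ⁆ gC :=
  expAd ((((Real.pi / 2 : ℝ) : ℂ) * Complex.I) • H)

/-- The fixed point set `g^f` of an automorphism `f` inside the real form `g`. -/
def FixIn (g : LieSubalgebra ℝ gC) (f : gC ≃ₗ⁅ℂ⁆ gC) : Set gC :=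
  {x : gC | x ∈ g ∧ f x = x}

/-- Root space decomposition: `gC` is spanned by `t_ℂ` together with the root spaces. -/
def SpansByRoots (t : LieSubalgebra ℝ gC) : Prop :=
  Submodule.span ℂ ((cspan gC t : Set gC) ∪
    {X : gC | ∃ a : Module.Dual ℂ gC, IsRoot gC t a ∧ X ∈ rootSpace gC t a}) = ⊤

/-!
Both `σ = Ad(exp (π/2) √-1 (2 K_p + K_q))` and `θ = Ad(exp (2π/3) √-1 (K_p + K_q))` fix `t_ℂ` and
act on the root space of a root `β` with `β(K_p) = a`, `β(K_q) = c` by `i^(2a+c)` and `ω^(a+c)`,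
`ω = e^(2πi/3)`. Every root is `±Σ k_j α_j` with `0 ≤ k_j ≤ m_j`: for the minus sign, `-β` is a
root because conjugation with respect to `g` maps the root space of `β` to that of `-β`, roots
being imaginary on `t` as the Killing form of `g` is negative definite. Since `m_p = m_q = 1`,
`(a, c)` lies in `{0,1}²` or in `{0,-1}²`, and for such pairs both scalars equal `1` exactly when
`a = c = 0`. As `t_ℂ` and the root spaces span `gC`, `σ` and `θ` have the same fixed vectors and
`θ³ = 1`; `θ ≠ 1` because it multiplies a highest root vector by `ω²`; and `θ` commutes with the
conjugation, hence preserves `g`, because its eigenvalues on root spaces have modulus one.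
-/

end Paper

namespace Module.End

section CommRing

variable {R M : Type*} [CommRing R] [AddCommGroup M] [Module R M] {f : Module.End R M}

theorem pow_apply_of_apply_eq_smul {v : M} {c : R} (hv : f v = c • v) (j : ℕ) :
    (f ^ j) v = c ^ j • v := by
  induction j with
  | zero => simp
  | succ j ih => rw [pow_succ, Module.End.mul_apply, hv, map_smul, ih, smul_smul, pow_succ']

theorem pow_eq_one_of_span_eigenvectors {s : Set M} {N : ℕ} (hs : Submodule.span R s = ⊤)
    (hf : ∀ v ∈ s, ∃ c : R, c ^ N = 1 ∧ f v = c • v) : f ^ N = 1 := by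
  refine LinearMap.ext_on hs fun v hv => ?_
  obtain ⟨c, hcN, hfv⟩ := hf v hv
  rw [pow_apply_of_apply_eq_smul hfv, hcN, one_smul, Module.End.one_apply]

end CommRing

section Field

variable {K V : Type*} [Field K] [AddCommGroup V] [Module K V]
  {f : Module.End K V} {s : Set V} {N : ℕ}

/-- Averaging over the powers `f ^ j`, `j < N`, projects onto the fixed vectors. -/
theorem apply_eq_self_iff_mem_span_of_span_eigenvectors (hs : Submodule.span K s = ⊤)
    (hN : (N : K) ≠ 0) (hf : ∀ v ∈ s, ∃ c : K, c ^ N = 1 ∧ f v = c • v) (x : V) :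
    f x = x ↔ x ∈ Submodule.span K {v ∈ s | f v = v} := by
  set P : Module.End K V := (N : K)⁻¹ • ∑ j ∈ Finset.range N, f ^ j
  have hP_eigen {v : V} {c : K} (hv : f v = c • v) :
      P v = ((N : K)⁻¹ * ∑ j ∈ Finset.range N, c ^ j) • v := by
    simp only [P, LinearMap.smul_apply, LinearMap.sum_apply, pow_apply_of_apply_eq_smul hv,
      ← Finset.sum_smul, smul_smul]
  have hP_fixed {y : V} (hy : f y = y) : P y = y := by
    rw [hP_eigen (c := 1) (by rw [one_smul, hy])]
    simp [inv_mul_cancel₀ hN]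
  have hP_mem (y : V) : P y ∈ Submodule.span K {v ∈ s | f v = v} := by
    have hy : y ∈ Submodule.span K s := hs ▸ Submodule.mem_top
    induction hy using Submodule.span_induction with
    | mem v hv =>
      obtain ⟨c, hcN, hfv⟩ := hf v hv
      by_cases hc : c = 1
      · have hfix : f v = v := by rw [hfv, hc, one_smul]
        rw [hP_fixed hfix]
        exact Submodule.subset_span ⟨hv, hfix⟩
      · rw [hP_eigen hfv, geom_sum_eq hc, hcN, sub_self, zero_div, mul_zero, zero_smul]
        exact Submodule.zero_mem _
    | zero => simp
    | add a b _ _ ha hb => rw [map_add]; exact Submodule.add_mem _ ha hb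
    | smul c a _ ha => rw [map_smul]; exact Submodule.smul_mem _ c ha
  refine ⟨fun hx => hP_fixed hx ▸ hP_mem x, fun hx => ?_⟩
  induction hx using Submodule.span_induction with
  | mem v hv => exact hv.2
  | zero => exact map_zero f
  | add a b _ _ ha hb => rw [map_add, ha, hb]
  | smul c a _ ha => rw [map_smul, ha]

theorem apply_eq_self_iff_of_span_eigenvectors {g : Module.End K V} {M : ℕ}
    (hs : Submodule.span K s = ⊤) (hN : (N : K) ≠ 0) (hM : (M : K) ≠ 0)
    (hf : ∀ v ∈ s, ∃ c : K, c ^ N = 1 ∧ f v = c • v)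
    (hg : ∀ v ∈ s, ∃ c : K, c ^ M = 1 ∧ g v = c • v) (hfg : ∀ v ∈ s, f v = v ↔ g v = v)
    (x : V) : f x = x ↔ g x = x := by
  rw [apply_eq_self_iff_mem_span_of_span_eigenvectors hs hN hf,
    apply_eq_self_iff_mem_span_of_span_eigenvectors hs hM hg, Set.sep_ext_iff.mpr hfg]

end Field

end Module.End

theorem smul_eq_self_iff {K V : Type*} [Field K] [AddCommGroup V] [Module K V] {c : K} {v : V} :
    c • v = v ↔ c = 1 ∨ v = 0 := by
  rw [← sub_eq_zero, show c • v - v = (c - 1) • v by rw [sub_smul, one_smul], smul_eq_zero,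
    sub_eq_zero]

namespace Complex

theorem conj_eq_neg_of_re_eq_zero {z : ℂ} (h : z.re = 0) : starRingEnd ℂ z = -z :=
  Complex.ext (by simp [h]) (by simp)

theorem exp_int_mul_two_pi_I_div_pow {N : ℕ} (hN : N ≠ 0) (k : ℤ) :
    exp (k * (2 * Real.pi * I / N)) ^ N = 1 := by
  rw [exp_int_mul, ← zpow_natCast, ← zpow_mul, mul_comm k, zpow_mul, zpow_natCast,
    (isPrimitiveRoot_exp N hN).pow_eq_one, one_zpow]

theorem exp_int_mul_two_pi_I_div_eq_one_iff {N : ℕ} (hN : N ≠ 0) (k : ℤ) :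
    exp (k * (2 * Real.pi * I / N)) = 1 ↔ (N : ℤ) ∣ k := by
  rw [exp_int_mul, (isPrimitiveRoot_exp N hN).zpow_eq_one_iff_dvd]

theorem smul_add_I_smul {E : Type*} [AddCommGroup E] [Module ℂ E] [Module ℝ E]
    [IsScalarTower ℝ ℂ E] (c : ℂ) (u v : E) :
    c • (u + I • v) = (c.re • u - c.im • v) + I • (c.im • u + c.re • v) := by
  simp only [RCLike.real_smul_eq_coe_smul (K := ℂ)]
  match_scalars <;> simp [Complex.ext_iff]

end Complex

/-- `u + √-1 v` is an eigenvector of `ad H` on the complexification, with eigenvalue `r + s √-1`. -/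
theorem LieAlgebra.eq_zero_of_lie_eq_rotation {L : Type*} [LieRing L] [LieAlgebra ℝ L]
    (hneg : ∀ x : L, x ≠ 0 → killingForm ℝ L x x < 0) {H u v : L} {r s : ℝ}
    (huv : u ≠ 0 ∨ v ≠ 0) (hu : ⁅H, u⁆ = r • u - s • v) (hv : ⁅H, v⁆ = s • u + r • v) :
    r = 0 := by
  set B := killingForm ℝ L
  have hinv (x : L) : B ⁅H, x⁆ x = 0 := by
    rw [LieModule.traceForm_apply_lie_apply, lie_self, map_zero]
  have hu' := hinv u
  have hv' := hinv v
  rw [hu] at hu'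
  rw [hv] at hv'
  simp only [map_sub, map_add, map_smul, LinearMap.sub_apply, LinearMap.add_apply,
    LinearMap.smul_apply, smul_eq_mul] at hu' hv'
  have hsymm : B v u = B u v := LieModule.traceForm_comm ℝ L L v u
  have hle (x : L) : B x x ≤ 0 := by
    rcases eq_or_ne x 0 with rfl | hx
    · simp
    · exact (hneg x hx).le
  have hsum : B u u + B v v < 0 := by
    rcases huv with hu0 | hv0
    · linarith [hneg u hu0, hle v]
    · linarith [hneg v hv0, hle u]
  have hr : r * (B u u + B v v) = 0 := by linear_combination hu' + hv' + s * hsymm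
  exact (mul_eq_zero.mp hr).resolve_right hsum.ne

namespace Paper

namespace IsCompactForm

variable {gC : Type} [LieRing gC] [LieAlgebra ℂ gC] [LieAlgebra ℝ gC] {g : LieSubalgebra ℝ gC}

theorem eq_of_add_I_smul_eq (hg : IsCompactForm gC g) {u v u' v' : gC}
    (hu : u ∈ g) (hv : v ∈ g) (hu' : u' ∈ g) (hv' : v' ∈ g)
    (h : u + I • v = u' + I • v') : u = u' ∧ v = v' := by
  have hvv : v - v' = 0 := by
    refine hg.inj _ (sub_mem hv hv') ?_
    rw [show I • (v - v') = u' - u by linear_combination (norm := module) h]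
    exact sub_mem hu' hu
  rw [sub_eq_zero] at hvv
  subst hvv
  exact ⟨add_right_cancel h, rfl⟩

/-- The components of `z = re z + I • im z` in the decomposition `gC = g ⊕ I • g`. -/
noncomputable def re (hg : IsCompactForm gC g) (z : gC) : gC := (hg.spans z).choose

noncomputable def im (hg : IsCompactForm gC g) (z : gC) : gC :=
  (hg.spans z).choose_spec.2.choose

variable (hg : IsCompactForm gC g)

theorem re_mem (z : gC) : hg.re z ∈ g := (hg.spans z).choose_spec.1

theorem im_mem (z : gC) : hg.im z ∈ g := (hg.spans z).choose_spec.2.choose_spec.1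

theorem re_add_I_smul_im (z : gC) : hg.re z + I • hg.im z = z :=
  (hg.spans z).choose_spec.2.choose_spec.2.symm

theorem re_im_eq {u v : gC} (hu : u ∈ g) (hv : v ∈ g) :
    hg.re (u + I • v) = u ∧ hg.im (u + I • v) = v :=
  hg.eq_of_add_I_smul_eq (hg.re_mem _) (hg.im_mem _) hu hv (hg.re_add_I_smul_im _)

variable [IsScalarTower ℝ ℂ gC]

noncomputable def conj : gC →ₗ⋆[ℂ] gC where
  toFun z := hg.re z - I • hg.im z
  map_add' y z := by
    have h := hg.re_im_eq (add_mem (hg.re_mem y) (hg.re_mem z))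
      (add_mem (hg.im_mem y) (hg.im_mem z))
    rw [smul_add, add_add_add_comm, hg.re_add_I_smul_im, hg.re_add_I_smul_im] at h
    rw [h.1, h.2]
    module
  map_smul' c z := by
    have h := hg.re_im_eq (sub_mem (g.smul_mem c.re (hg.re_mem z)) (g.smul_mem c.im (hg.im_mem z)))
      (add_mem (g.smul_mem c.im (hg.re_mem z)) (g.smul_mem c.re (hg.im_mem z)))
    rw [← Complex.smul_add_I_smul, hg.re_add_I_smul_im] at h
    rw [h.1, h.2]
    simp only [RCLike.real_smul_eq_coe_smul (K := ℂ)]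
    match_scalars <;> simp [Complex.ext_iff]

theorem conj_add_I_smul {u v : gC} (hu : u ∈ g) (hv : v ∈ g) :
    hg.conj (u + I • v) = u - I • v := by
  obtain ⟨h1, h2⟩ := hg.re_im_eq hu hv
  simp only [conj, LinearMap.coe_mk, AddHom.coe_mk, h1, h2]

theorem conj_of_mem {x : gC} (hx : x ∈ g) : hg.conj x = x := by
  simpa using hg.conj_add_I_smul hx g.zero_mem

theorem conj_conj (z : gC) : hg.conj (hg.conj z) = z := by
  rw [← hg.re_add_I_smul_im z, hg.conj_add_I_smul (hg.re_mem z) (hg.im_mem z), map_sub,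
    hg.conj_of_mem (hg.re_mem z), map_smulₛₗ, hg.conj_of_mem (hg.im_mem z)]
  simp [sub_eq_add_neg]

theorem mem_of_conj_eq {z : gC} (hz : hg.conj z = z) : z ∈ g := by
  have h := hg.re_add_I_smul_im z
  rw [← h, hg.conj_add_I_smul (hg.re_mem z) (hg.im_mem z)] at hz
  have him : (2 * I) • hg.im z = 0 := by linear_combination (norm := module) -hz
  rw [smul_eq_zero, or_iff_right (by simp)] at him
  rw [← h, him, smul_zero, add_zero]
  exact hg.re_mem z

theorem conj_lie_of_mem {H : gC} (hH : H ∈ g) (z : gC) : hg.conj ⁅H, z⁆ = ⁅H, hg.conj z⁆ := by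
  rw [← hg.re_add_I_smul_im z, hg.conj_add_I_smul (hg.re_mem z) (hg.im_mem z), lie_add, lie_smul,
    hg.conj_add_I_smul (g.lie_mem hH (hg.re_mem z)) (g.lie_mem hH (hg.im_mem z)), lie_sub,
    lie_smul]

theorem re_eq_zero_of_lie_eq_smul (hg : IsCompactForm gC g) {H X : gC} {c : ℂ} (hH : H ∈ g)
    (hX : X ≠ 0) (h : ⁅H, X⁆ = c • X) : c.re = 0 := by
  have hu := hg.re_mem X
  have hv := hg.im_mem X
  obtain ⟨hHu, hHv⟩ := hg.eq_of_add_I_smul_eq (g.lie_mem hH hu) (g.lie_mem hH hv)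
    (sub_mem (g.smul_mem c.re hu) (g.smul_mem c.im hv))
    (add_mem (g.smul_mem c.im hu) (g.smul_mem c.re hv))
    (by rw [← lie_smul, ← lie_add, hg.re_add_I_smul_im, h, ← Complex.smul_add_I_smul,
      hg.re_add_I_smul_im])
  refine LieAlgebra.eq_zero_of_lie_eq_rotation (H := ⟨H, hH⟩) (u := ⟨_, hu⟩) (v := ⟨_, hv⟩)
    hg.negdef ?_ (Subtype.ext hHu) (Subtype.ext hHv)
  by_contra! h0
  apply hX
  rw [← hg.re_add_I_smul_im X, show hg.re X = 0 from congrArg Subtype.val h0.1,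
    show hg.im X = 0 from congrArg Subtype.val h0.2, smul_zero, add_zero]

end IsCompactForm

section Roots

variable {gC : Type} [LieRing gC] [LieAlgebra ℂ gC] [LieAlgebra ℝ gC] {g t : LieSubalgebra ℝ gC}
  {b : Module.Dual ℂ gC}

theorem mem_rootSpace_of_forall_mem {Y : gC} (h : ∀ H ∈ t, ⁅H, Y⁆ = b H • Y) :
    Y ∈ rootSpace gC t b := by
  intro H hH
  induction hH using Submodule.span_induction with
  | mem H hH => exact h H hH
  | zero => simp
  | add H H' _ _ hH hH' => rw [add_lie, hH, hH', map_add, add_smul]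
  | smul c H _ hH => rw [smul_lie, hH, map_smul, smul_eq_mul, smul_smul]

variable [IsScalarTower ℝ ℂ gC]

theorem IsRoot.re_apply_eq_zero (hg : IsCompactForm gC g) (ht : t ≤ g) (hb : IsRoot gC t b)
    {H : gC} (hH : H ∈ t) : (b H).re = 0 := by
  obtain ⟨-, X, hX0, hX⟩ := hb
  exact hg.re_eq_zero_of_lie_eq_smul (ht hH) hX0 (hX H (Submodule.subset_span hH))

theorem IsCompactForm.conj_mem_rootSpace_neg (hg : IsCompactForm gC g) (ht : t ≤ g)
    (hb : IsRoot gC t b) {X : gC} (hX : X ∈ rootSpace gC t b) :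
    hg.conj X ∈ rootSpace gC t (-b) :=
  mem_rootSpace_of_forall_mem fun H hH => by
    rw [← hg.conj_lie_of_mem (ht hH), hX H (Submodule.subset_span hH), map_smulₛₗ,
      Complex.conj_eq_neg_of_re_eq_zero (hb.re_apply_eq_zero hg ht hH), LinearMap.neg_apply]

theorem IsRoot.neg (hg : IsCompactForm gC g) (ht : t ≤ g) (hb : IsRoot gC t b) :
    IsRoot gC t (-b) := by
  have ⟨⟨H, hH, hbH⟩, X, hX0, hX⟩ := hb
  refine ⟨⟨H, hH, by simpa using hbH⟩, hg.conj X, ?_, hg.conj_mem_rootSpace_neg ht hb hX⟩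
  exact fun h => hX0 (by rw [← hg.conj_conj X, h, map_zero])

end Roots

section SimpleSystem

variable {gC : Type} [LieRing gC] [LieAlgebra ℂ gC] [LieAlgebra ℝ gC] {t : LieSubalgebra ℝ gC}
  {n : ℕ} {α : ℕ → Module.Dual ℂ gC} {K : ℕ → gC} {i : ℕ}

theorem IsSimpleSystem.sum_mul_apply_K (hsys : IsSimpleSystem gC t n α K)
    (hi : i ∈ Finset.Icc 1 n) (k : ℕ → ℕ) :
    ∑ j ∈ Finset.Icc 1 n, (k j : ℂ) * α j (K i) = k i := by
  rw [Finset.sum_congr rfl fun j hj => by rw [hsys.K_dual j hj i hi, mul_ite, mul_one, mul_zero],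
    Finset.sum_ite_eq' _ _ _, if_pos hi]

theorem IsHighestRoot.apply_K {δ : Module.Dual ℂ gC} {m : ℕ → ℕ}
    (hδ : IsHighestRoot gC t n α δ m) (hsys : IsSimpleSystem gC t n α K)
    (hi : i ∈ Finset.Icc 1 n) : δ (K i) = m i := by
  rw [hδ.decomp _ (hsys.K_mem i hi), hsys.sum_mul_apply_K hi]

theorem IsRoot.exists_coeff_le [IsScalarTower ℝ ℂ gC] {g : LieSubalgebra ℝ gC}
    {δ b : Module.Dual ℂ gC} {m : ℕ → ℕ} (hg : IsCompactForm gC g) (ht : t ≤ g)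
    (hsys : IsSimpleSystem gC t n α K) (hδ : IsHighestRoot gC t n α δ m) (hb : IsRoot gC t b) :
    ∃ k : ℕ → ℕ, (∀ j ∈ Finset.Icc 1 n, k j ≤ m j) ∧
      ((∀ j ∈ Finset.Icc 1 n, b (K j) = k j) ∨ ∀ j ∈ Finset.Icc 1 n, b (K j) = -(k j)) := by
  rcases hsys.decomp b hb with ⟨k, hk⟩ | ⟨k, hk⟩
  · exact ⟨k, hδ.highest b k hb hk, Or.inl fun j hj => by
      rw [hk _ (hsys.K_mem j hj), hsys.sum_mul_apply_K hj]⟩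
  · have hk' : ∀ H ∈ cspan gC t, (-b) H = ∑ j ∈ Finset.Icc 1 n, (k j : ℂ) * α j H :=
      fun H hH => by rw [LinearMap.neg_apply, hk H hH, neg_neg]
    exact ⟨k, hδ.highest (-b) k (hb.neg hg ht) hk', Or.inr fun j hj => by
      rw [hk _ (hsys.K_mem j hj), hsys.sum_mul_apply_K hj]⟩

end SimpleSystem

theorem lieEquiv_pow_apply {L : Type} [LieRing L] [LieAlgebra ℂ L] (f : L ≃ₗ⁅ℂ⁆ L) (n : ℕ)
    (x : L) : (f ^ n) x = ((f : Module.End ℂ L) ^ n) x := by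
  induction n generalizing x with
  | zero => rfl
  | succ n ih => rw [pow_succ, pow_succ, Module.End.mul_apply, ← ih]; rfl

def rootGenerators {gC : Type} [LieRing gC] [LieAlgebra ℂ gC] [LieAlgebra ℝ gC]
    (t : LieSubalgebra ℝ gC) : Set gC :=
  (cspan gC t : Set gC) ∪ {X : gC | ∃ a : Module.Dual ℂ gC, IsRoot gC t a ∧ X ∈ rootSpace gC t a}

section ExpAd

variable {gC : Type} [LieRing gC] [LieAlgebra ℂ gC] [LieAlgebra ℝ gC] {g t : LieSubalgebra ℝ gC}
  {expAd : gC → (gC ≃ₗ⁅ℂ⁆ gC)} {Z : gC}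

theorem IsMaxAbelian.lie_eq_zero_of_mem_cspan (ht : IsMaxAbelian gC g t) {x y : gC}
    (hx : x ∈ cspan gC t) (hy : y ∈ cspan gC t) : ⁅x, y⁆ = 0 := by
  induction hx using Submodule.span_induction generalizing y with
  | mem x hx =>
    induction hy using Submodule.span_induction with
    | mem y hy => exact ht.abelian x hx y hy
    | zero => exact lie_zero x
    | add y y' _ _ h h' => rw [lie_add, h, h', add_zero]
    | smul c y _ h => rw [lie_smul, h, smul_zero]
  | zero => exact zero_lie y
  | add x x' _ _ h h' => rw [add_lie, h hy, h' hy, add_zero]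
  | smul c x _ h => rw [smul_lie, h hy, smul_zero]

theorem IsExpAd.apply_of_mem_rootSpace (hexp : IsExpAd gC expAd) (hZ : Z ∈ cspan gC t)
    {b : Module.Dual ℂ gC} {X : gC} (hX : X ∈ rootSpace gC t b) :
    expAd Z X = Complex.exp (b Z) • X :=
  hexp.eig _ _ _ (hX Z hZ)

theorem IsExpAd.apply_of_mem_cspan (hexp : IsExpAd gC expAd) (ht : IsMaxAbelian gC g t)
    (hZ : Z ∈ cspan gC t) {H : gC} (hH : H ∈ cspan gC t) : expAd Z H = H := by
  rw [hexp.eig Z H 0 (by rw [ht.lie_eq_zero_of_mem_cspan hZ hH, zero_smul]), Complex.exp_zero,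
    one_smul]

variable {N : ℕ}

theorem IsExpAd.exists_pow_eq_one_apply (hexp : IsExpAd gC expAd) (ht : IsMaxAbelian gC g t)
    (hN : N ≠ 0) (hZ : Z ∈ cspan gC t)
    (hroot : ∀ b, IsRoot gC t b → ∃ k : ℤ, b Z = k * (2 * Real.pi * I / N)) :
    ∀ v ∈ rootGenerators t, ∃ c : ℂ, c ^ N = 1 ∧ (expAd Z : Module.End ℂ gC) v = c • v := by
  rintro v (hv | ⟨b, hb, hv⟩)
  · exact ⟨1, one_pow N, by rw [one_smul]; exact hexp.apply_of_mem_cspan ht hZ hv⟩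
  · obtain ⟨k, hk⟩ := hroot b hb
    refine ⟨_, Complex.exp_int_mul_two_pi_I_div_pow hN k, ?_⟩
    rw [← hk]
    exact hexp.apply_of_mem_rootSpace hZ hv

theorem IsExpAd.pow_eq_one (hexp : IsExpAd gC expAd) (ht : IsMaxAbelian gC g t)
    (hspan : SpansByRoots gC t) (hN : N ≠ 0) (hZ : Z ∈ cspan gC t)
    (hroot : ∀ b, IsRoot gC t b → ∃ k : ℤ, b Z = k * (2 * Real.pi * I / N)) :
    expAd Z ^ N = 1 := by
  refine LieEquiv.ext fun x => ?_
  rw [lieEquiv_pow_apply, Module.End.pow_eq_one_of_span_eigenvectors hspan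
    (hexp.exists_pow_eq_one_apply ht hN hZ hroot)]
  rfl

theorem IsExpAd.apply_eq_self_iff (hexp : IsExpAd gC expAd) (ht : IsMaxAbelian gC g t)
    (hspan : SpansByRoots gC t) {N' : ℕ} {Z' : gC} (hN : N ≠ 0) (hN' : N' ≠ 0)
    (hZ : Z ∈ cspan gC t) (hZ' : Z' ∈ cspan gC t)
    (hroot : ∀ b, IsRoot gC t b → ∃ k k' : ℤ, b Z = k * (2 * Real.pi * I / N) ∧
      b Z' = k' * (2 * Real.pi * I / N') ∧ ((N : ℤ) ∣ k ↔ (N' : ℤ) ∣ k')) (x : gC) :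
    expAd Z x = x ↔ expAd Z' x = x := by
  have hk : ∀ b, IsRoot gC t b → ∃ k : ℤ, b Z = k * (2 * Real.pi * I / N) := fun b hb => by
    obtain ⟨k, -, hk, -⟩ := hroot b hb
    exact ⟨k, hk⟩
  have hk' : ∀ b, IsRoot gC t b → ∃ k' : ℤ, b Z' = k' * (2 * Real.pi * I / N') := fun b hb => by
    obtain ⟨-, k', -, hk', -⟩ := hroot b hb
    exact ⟨k', hk'⟩
  refine Module.End.apply_eq_self_iff_of_span_eigenvectors hspan (Nat.cast_ne_zero.mpr hN)
    (Nat.cast_ne_zero.mpr hN') (hexp.exists_pow_eq_one_apply ht hN hZ hk)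
    (hexp.exists_pow_eq_one_apply ht hN' hZ' hk') ?_ x
  rintro v (hv | ⟨b, hb, hv⟩)
  · exact iff_of_true (hexp.apply_of_mem_cspan ht hZ hv) (hexp.apply_of_mem_cspan ht hZ' hv)
  · obtain ⟨k, k', hk, hk', hkk'⟩ := hroot b hb
    change expAd Z v = v ↔ expAd Z' v = v
    rw [hexp.apply_of_mem_rootSpace hZ hv, hexp.apply_of_mem_rootSpace hZ' hv, smul_eq_self_iff,
      smul_eq_self_iff, hk, hk', Complex.exp_int_mul_two_pi_I_div_eq_one_iff hN,
      Complex.exp_int_mul_two_pi_I_div_eq_one_iff hN', hkk']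

theorem IsExpAd.ne_one (hexp : IsExpAd gC expAd) (hZ : Z ∈ cspan gC t) {b : Module.Dual ℂ gC}
    (hb : IsRoot gC t b) (hN : N ≠ 0) {k : ℤ} (hk : b Z = k * (2 * Real.pi * I / N))
    (hdvd : ¬ (N : ℤ) ∣ k) : expAd Z ≠ 1 := by
  obtain ⟨-, X, hX0, hX⟩ := hb
  intro h
  have hfix : Complex.exp (b Z) • X = X := by
    rw [← hexp.apply_of_mem_rootSpace hZ hX, h]
    rfl
  rw [smul_eq_self_iff, hk, Complex.exp_int_mul_two_pi_I_div_eq_one_iff hN] at hfix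
  exact hfix.elim hdvd hX0

variable [IsScalarTower ℝ ℂ gC]

theorem IsCompactForm.conj_mem_cspan (hg : IsCompactForm gC g) (ht : t ≤ g) {H : gC}
    (hH : H ∈ cspan gC t) : hg.conj H ∈ cspan gC t := by
  induction hH using Submodule.span_induction with
  | mem H hH => rw [hg.conj_of_mem (ht hH)]; exact Submodule.subset_span hH
  | zero => rw [map_zero]; exact Submodule.zero_mem _
  | add H H' _ _ h h' => rw [map_add]; exact Submodule.add_mem _ h h'
  | smul c H _ h => rw [map_smulₛₗ]; exact Submodule.smul_mem _ _ h

theorem IsExpAd.conj_apply (hexp : IsExpAd gC expAd) (hg : IsCompactForm gC g)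
    (ht : IsMaxAbelian gC g t) (hspan : SpansByRoots gC t) (hZ : Z ∈ cspan gC t)
    (hroot : ∀ b, IsRoot gC t b → (b Z).re = 0) (x : gC) :
    hg.conj (expAd Z x) = expAd Z (hg.conj x) := by
  suffices h : hg.conj.comp (expAd Z : Module.End ℂ gC) = (expAd Z : Module.End ℂ gC).comp hg.conj
    from LinearMap.congr_fun h x
  refine LinearMap.ext_on hspan ?_
  rintro v (hv | ⟨b, hb, hv⟩)
  · change hg.conj (expAd Z v) = expAd Z (hg.conj v)
    rw [hexp.apply_of_mem_cspan ht hZ hv,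
      hexp.apply_of_mem_cspan ht hZ (hg.conj_mem_cspan ht.le hv)]
  · change hg.conj (expAd Z v) = expAd Z (hg.conj v)
    rw [hexp.apply_of_mem_rootSpace hZ hv,
      hexp.apply_of_mem_rootSpace hZ (hg.conj_mem_rootSpace_neg ht.le hb hv), map_smulₛₗ,
      ← Complex.exp_conj, Complex.conj_eq_neg_of_re_eq_zero (hroot b hb), LinearMap.neg_apply]

theorem IsExpAd.apply_mem (hexp : IsExpAd gC expAd) (hg : IsCompactForm gC g)
    (ht : IsMaxAbelian gC g t) (hspan : SpansByRoots gC t) (hZ : Z ∈ cspan gC t)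
    (hroot : ∀ b, IsRoot gC t b → (b Z).re = 0) {x : gC} (hx : x ∈ g) : expAd Z x ∈ g :=
  hg.mem_of_conj_eq (by rw [hexp.conj_apply hg ht hspan hZ hroot, hg.conj_of_mem hx])

end ExpAd

/-- Both values lie in `{0, 1}` or both in `{0, -1}`, and for such pairs `2a + c ≡ 0 (mod 4)` and
`a + c ≡ 0 (mod 3)` both mean `a = c = 0`. -/
theorem IsRoot.dvd_iff_of_coeff_eq_one {gC : Type} [LieRing gC] [LieAlgebra ℂ gC]
    [LieAlgebra ℝ gC] [IsScalarTower ℝ ℂ gC] {g t : LieSubalgebra ℝ gC} {n : ℕ}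
    {α : ℕ → Module.Dual ℂ gC} {K : ℕ → gC} {δ b : Module.Dual ℂ gC} {m : ℕ → ℕ} {p q : ℕ}
    (hg : IsCompactForm gC g) (ht : t ≤ g)
    (hsys : IsSimpleSystem gC t n α K) (hδ : IsHighestRoot gC t n α δ m)
    (hp : p ∈ Finset.Icc 1 n) (hq : q ∈ Finset.Icc 1 n) (hmp : m p = 1) (hmq : m q = 1)
    (hb : IsRoot gC t b) :
    ∃ a c : ℤ, b (K p) = a ∧ b (K q) = c ∧ ((4 : ℤ) ∣ 2 * a + c ↔ (3 : ℤ) ∣ a + c) := by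
  obtain ⟨k, hkm, hk | hk⟩ := hb.exists_coeff_le hg ht hsys hδ
  · refine ⟨k p, k q, by rw [hk p hp]; norm_cast, by rw [hk q hq]; norm_cast, ?_⟩
    have := hkm p hp
    have := hkm q hq
    omega
  · refine ⟨-k p, -k q, by rw [hk p hp]; push_cast; rfl, by rw [hk q hq]; push_cast; rfl, ?_⟩
    have := hkm p hp
    have := hkm q hq
    omega

theorem stmt_6_general
    (gC : Type) [LieRing gC] [LieAlgebra ℂ gC] [LieAlgebra ℝ gC]
    [IsScalarTower ℝ ℂ gC]
    (g t : LieSubalgebra ℝ gC)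
    (hg : IsCompactForm gC g) (ht : IsMaxAbelian gC g t)
    (expAd : gC → (gC ≃ₗ⁅ℂ⁆ gC)) (hexp : IsExpAd gC expAd)
    (hspan : SpansByRoots gC t)
    (n : ℕ) (α : ℕ → Module.Dual ℂ gC) (K : ℕ → gC)
    (hsys : IsSimpleSystem gC t n α K)
    (δ : Module.Dual ℂ gC) (m : ℕ → ℕ) (hδ : IsHighestRoot gC t n α δ m)
    (p q : ℕ) (hp : p ∈ Finset.Icc 1 n) (hq : q ∈ Finset.Icc 1 n)
    (hmp : m p = 1) (hmq : m q = 1) :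
    FixIn gC g (sigmaAd gC expAd ((2 : ℂ) • K p + K q)) =
      FixIn gC g (expAd ((((2 * Real.pi / 3 : ℝ) : ℂ) * Complex.I) • (K p + K q))) ∧
    (expAd ((((2 * Real.pi / 3 : ℝ) : ℂ) * Complex.I) • (K p + K q))) ^ 3 = 1 ∧
    (expAd ((((2 * Real.pi / 3 : ℝ) : ℂ) * Complex.I) • (K p + K q))) ≠ 1 ∧
    ∃ θ : gC ≃ₗ⁅ℂ⁆ gC, θ ^ 3 = 1 ∧ θ ≠ 1 ∧ (∀ x ∈ g, θ x ∈ g) ∧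
      FixIn gC g (sigmaAd gC expAd ((2 : ℂ) • K p + K q)) = FixIn gC g θ := by
  set Z := (((Real.pi / 2 : ℝ) : ℂ) * I) • ((2 : ℂ) • K p + K q)
  set W := (((2 * Real.pi / 3 : ℝ) : ℂ) * I) • (K p + K q)
  have hKp := hsys.K_mem p hp
  have hKq := hsys.K_mem q hq
  have hZ : Z ∈ cspan gC t := Submodule.smul_mem _ _ (add_mem (Submodule.smul_mem _ _ hKp) hKq)
  have hW : W ∈ cspan gC t := Submodule.smul_mem _ _ (add_mem hKp hKq)
  have hroot : ∀ b, IsRoot gC t b → ∃ k k' : ℤ, b Z = k * (2 * Real.pi * I / (4 : ℕ)) ∧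
      b W = k' * (2 * Real.pi * I / (3 : ℕ)) ∧ (((4 : ℕ) : ℤ) ∣ k ↔ ((3 : ℕ) : ℤ) ∣ k') := by
    intro b hb
    obtain ⟨a, c, ha, hc, hac⟩ := hb.dvd_iff_of_coeff_eq_one hg ht.le hsys hδ hp hq hmp hmq
    refine ⟨2 * a + c, a + c, ?_, ?_, by exact_mod_cast hac⟩ <;>
      simp only [Z, W, map_smul, map_add, ha, hc, smul_eq_mul] <;> push_cast <;> ring
  have hrootW (b) (hb : IsRoot gC t b) : ∃ k : ℤ, b W = k * (2 * Real.pi * I / (3 : ℕ)) := by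
    obtain ⟨-, k, -, hk, -⟩ := hroot b hb
    exact ⟨k, hk⟩
  have hfix : FixIn gC g (sigmaAd gC expAd ((2 : ℂ) • K p + K q)) = FixIn gC g (expAd W) := by
    ext x
    exact and_congr_right fun _ =>
      hexp.apply_eq_self_iff ht hspan four_ne_zero three_ne_zero hZ hW hroot x
  have hcube : expAd W ^ 3 = 1 := hexp.pow_eq_one ht hspan three_ne_zero hW hrootW
  have hne : expAd W ≠ 1 := hexp.ne_one hW hδ.isRoot three_ne_zero (k := 2)
    (by simp only [W, map_smul, map_add, hδ.apply_K hsys hp, hδ.apply_K hsys hq, hmp, hmq,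
      smul_eq_mul]; push_cast; ring) (by norm_num)
  have hmem (x) (hx : x ∈ g) : expAd W x ∈ g := hexp.apply_mem hg ht hspan hW (fun b hb => by
    obtain ⟨k, hk⟩ := hrootW b hb
    simp [hk]) hx
  exact ⟨hfix, hcube, hne, expAd W, hcube, hne, hmem, hfix⟩

/-- Remark 2.2 (1), second part.  Let `g` be a compact simple Lie algebra,
`t` a maximal abelian subalgebra, `δ = Σ m_j α_j` the highest root and `K i` the dual basis
of `t_ℂ`.  Suppose `m p = m q = 1` and `σ = Ad(exp (π/2) √-1 (2 K p + K q))`.  Then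
`g^σ = g^θ` for `θ = Ad(exp (2π/3) √-1 (K p + K q))`; consequently, since `θ` has order
`3`, `(g, g^σ)` is a 3-symmetric pair. -/
theorem stmt_6
    (gC : Type) [LieRing gC] [LieAlgebra ℂ gC] [LieAlgebra ℝ gC]
    [IsScalarTower ℝ ℂ gC] [FiniteDimensional ℂ gC]
    [LieAlgebra.IsSimple ℂ gC]
    (g t : LieSubalgebra ℝ gC)
    (hg : IsCompactForm gC g) (ht : IsMaxAbelian gC g t)
    (expAd : gC → (gC ≃ₗ⁅ℂ⁆ gC)) (hexp : IsExpAd gC expAd)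
    (hspan : SpansByRoots gC t)
    (n : ℕ) (α : ℕ → Module.Dual ℂ gC) (K : ℕ → gC)
    (hsys : IsSimpleSystem gC t n α K)
    (δ : Module.Dual ℂ gC) (m : ℕ → ℕ) (hδ : IsHighestRoot gC t n α δ m)
    (p q : ℕ) (hp : p ∈ Finset.Icc 1 n) (hq : q ∈ Finset.Icc 1 n) (hpq : p ≠ q)
    (hmp : m p = 1) (hmq : m q = 1) :
    FixIn gC g (sigmaAd gC expAd ((2 : ℂ) • K p + K q)) =
      FixIn gC g (expAd ((((2 * Real.pi / 3 : ℝ) : ℂ) * Complex.I) • (K p + K q))) ∧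
    (expAd ((((2 * Real.pi / 3 : ℝ) : ℂ) * Complex.I) • (K p + K q))) ^ 3 = 1 ∧
    (expAd ((((2 * Real.pi / 3 : ℝ) : ℂ) * Complex.I) • (K p + K q))) ≠ 1 ∧
    ∃ θ : gC ≃ₗ⁅ℂ⁆ gC, θ ^ 3 = 1 ∧ θ ≠ 1 ∧ (∀ x ∈ g, θ x ∈ g) ∧
      FixIn gC g (sigmaAd gC expAd ((2 : ℂ) • K p + K q)) = FixIn gC g θ :=
  stmt_6_general gC g t hg ht expAd hexp hspan n α K hsys δ m hδ p q hp hq hmp hmq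

end Paper
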